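/- arXiv:2501.05203 — 6 statements merged into one kernel-verified Lean document; each statement's English description precedes it below -/
import Mathlib

section
/- For a monic polynomial P of degree d ≥ 2, the filled-in Julia set K(P) is nonempty, compact, and its complement ℂ \ K(P) is connected. -/
open Polynomial

/-- The filled-in Julia set of a polynomial: points with bounded forward orbit. -/
def filledJulia (P : Polynomial ℂ) : Set ℂ :=
  {z : ℂ | Bornology.IsBounded (Set.range fun k => (fun w => P.eval w)^[k] z)}

/-!
Outside a large disc `|z| > R` a polynomial of degree `≥ 2` at least doubles `|z|`, so an orbit that
ever leaves the disc escapes to infinity. Hence `K(P) = ⋂ₖ (Pᵏ)⁻¹(D̄(0, R))`, which is compact, and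
nonempty since it contains the fixed points of `P`. If `Kᶜ` had a bounded component `C`, then
`∂C ⊆ K`, so `|Pᵏ| ≤ R` on `∂C` for every `k`, and by the maximum modulus principle on all of `C`,
i.e. `C ⊆ K`, which is absurd. Thus every component of `Kᶜ` reaches the connected set `|z| > R`.
-/

open Set Metric Bornology Filter Function

namespace Polynomial

theorem exists_two_mul_norm_le_norm_eval {𝕜 : Type*} [NormedField 𝕜] {P : 𝕜[X]}
    (hd : 2 ≤ P.natDegree) : ∃ R, 0 ≤ R ∧ ∀ z : 𝕜, R ≤ ‖z‖ → 2 * ‖z‖ ≤ ‖P.eval z‖ := by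
  have hdivX : 0 < P.divX.degree :=
    natDegree_pos_iff_degree_pos.mp (by rw [natDegree_divX_eq_natDegree_tsub_one]; omega)
  have hlarge : ∀ᶠ z in cobounded 𝕜, 3 ≤ ‖P.divX.eval z‖ ∧ ‖P.coeff 0‖ ≤ ‖z‖ :=
    ((P.divX.tendsto_norm_atTop hdivX tendsto_norm_cobounded_atTop).eventually_ge_atTop 3).and
      (eventually_cobounded_le_norm _)
  obtain ⟨R, -, hR⟩ := hasBasis_cobounded_norm.eventually_iff.mp hlarge
  refine ⟨max R 0, le_max_right _ _, fun z hz => ?_⟩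
  obtain ⟨h3, hc⟩ := hR (le_of_max_le_left hz)
  calc 2 * ‖z‖ ≤ ‖z * P.divX.eval z‖ - ‖P.coeff 0‖ := by
        rw [norm_mul]; nlinarith [norm_nonneg z]
    _ ≤ ‖P.eval z‖ := by
        conv_rhs => rw [← X_mul_divX_add P]
        simpa only [eval_add, eval_mul, eval_X, eval_C] using norm_sub_le_norm_add _ _

theorem exists_isFixedPt_eval {K : Type*} [Field K] [IsAlgClosed K] {P : K[X]}
    (hd : 2 ≤ P.natDegree) : ∃ z, IsFixedPt (fun w => P.eval w) z := by
  have hdeg : (P - X).degree ≠ 0 := by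
    rw [degree_sub_eq_left_of_degree_lt (degree_lt_degree (by rw [natDegree_X]; omega))]
    exact fun h => by rw [natDegree_eq_zero_iff_degree_le_zero.mpr h.le] at hd; omega
  obtain ⟨z, hz⟩ := IsAlgClosed.exists_root _ hdeg
  exact ⟨z, sub_eq_zero.mp (by simpa using hz)⟩

end Polynomial

section Orbits

variable {E : Type*} [SeminormedAddGroup E] {f : E → E} {R : ℝ}

theorem Function.IsFixedPt.isBounded_range_iterate {z : E} (hz : IsFixedPt f z) :
    IsBounded (range fun k => f^[k] z) :=
  isBounded_singleton.subset (range_subset_iff.2 fun k => (hz.iterate k).eq)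

theorem two_pow_mul_norm_le_norm_iterate (hR : ∀ z, R ≤ ‖z‖ → 2 * ‖z‖ ≤ ‖f z‖) {z : E}
    (hz : R ≤ ‖z‖) (k : ℕ) : 2 ^ k * ‖z‖ ≤ ‖f^[k] z‖ := by
  induction k with
  | zero => simp
  | succ k ih =>
    have hk : R ≤ ‖f^[k] z‖ := by
      nlinarith [one_le_pow₀ (M₀ := ℝ) (n := k) one_le_two, norm_nonneg z]
    rw [iterate_succ_apply', pow_succ']
    nlinarith [hR _ hk]

theorem not_isBounded_range_iterate (hR0 : 0 ≤ R) (hR : ∀ z, R ≤ ‖z‖ → 2 * ‖z‖ ≤ ‖f z‖)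
    {z : E} (hz : R < ‖z‖) : ¬ IsBounded (range fun k => f^[k] z) := by
  rw [isBounded_iff_forall_norm_le]
  rintro ⟨M, hM⟩
  have hgrow : Tendsto (fun k : ℕ => 2 ^ k * ‖z‖) atTop atTop :=
    (tendsto_pow_atTop_atTop_of_one_lt one_lt_two).atTop_mul_const (hR0.trans_lt hz)
  obtain ⟨k, hk⟩ := (hgrow.eventually_gt_atTop M).exists
  exact hk.not_ge ((two_pow_mul_norm_le_norm_iterate hR hz.le k).trans (hM _ ⟨k, rfl⟩))

theorem setOf_isBounded_range_iterate_eq_iInter (hR0 : 0 ≤ R)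
    (hR : ∀ z, R ≤ ‖z‖ → 2 * ‖z‖ ≤ ‖f z‖) :
    {z | IsBounded (range fun k => f^[k] z)} = ⋂ k, f^[k] ⁻¹' closedBall 0 R := by
  ext z
  simp only [mem_ofPred_eq, mem_iInter, mem_preimage, mem_closedBall_zero_iff]
  refine ⟨fun hz k => ?_, fun hz => ?_⟩
  · by_contra! hk
    refine not_isBounded_range_iterate hR0 hR hk (hz.subset ?_)
    rintro _ ⟨j, rfl⟩
    exact ⟨j + k, iterate_add_apply f j k z⟩
  · exact isBounded_closedBall.subset
      (range_subset_iff.2 fun k => mem_closedBall_zero_iff.2 (hz k))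

theorem isCompact_iInter_preimage_iterate_closedBall [ProperSpace E] (hf : Continuous f) (R : ℝ) :
    IsCompact (⋂ k, f^[k] ⁻¹' closedBall 0 R) :=
  (isCompact_closedBall 0 R).of_isClosed_subset
    (isClosed_iInter fun k => isClosed_closedBall.preimage (hf.iterate k))
    (iInter_subset_of_subset 0 subset_rfl)

end Orbits

theorem IsOpen.frontier_connectedComponentIn_subset_compl {X : Type*} [TopologicalSpace X]
    [LocallyConnectedSpace X] {U : Set X} (hU : IsOpen U) (x : X) :
    frontier (connectedComponentIn U x) ⊆ Uᶜ := by
  intro w hw hwU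
  obtain ⟨p, hpw, hpx⟩ := mem_closure_iff.mp hw.1 _ hU.connectedComponentIn
    (mem_connectedComponentIn hwU)
  rw [hU.connectedComponentIn.frontier_eq, connectedComponentIn_eq hpx,
    ← connectedComponentIn_eq hpw] at hw
  exact hw.2 (mem_connectedComponentIn hwU)

/-- Maximum modulus principle on a bounded component, whose frontier lies in the set. -/
theorem not_isBounded_connectedComponentIn_compl_iInter_preimage_closedBall
    {ι E F : Type*} [NormedAddCommGroup E] [NormedSpace ℂ E] [Nontrivial E]
    [NormedAddCommGroup F] [NormedSpace ℂ F] {g : ι → E → F} (hg : ∀ i, Differentiable ℂ (g i))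
    (R : ℝ) {y : E} (hy : y ∉ ⋂ i, g i ⁻¹' closedBall 0 R) :
    ¬ IsBounded (connectedComponentIn (⋂ i, g i ⁻¹' closedBall 0 R)ᶜ y) := by
  intro hbdd
  have hclosed : IsClosed (⋂ i, g i ⁻¹' closedBall 0 R) :=
    isClosed_iInter fun i => isClosed_closedBall.preimage (hg i).continuous
  refine hy (mem_iInter.2 fun i => mem_closedBall_zero_iff.2 ?_)
  refine Complex.norm_le_of_forall_mem_frontier_norm_le hbdd (hg i).diffContOnCl (fun w hw => ?_)
    (subset_closure (mem_connectedComponentIn hy))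
  have hw := hclosed.isOpen_compl.frontier_connectedComponentIn_subset_compl y hw
  rw [compl_compl] at hw
  exact mem_closedBall_zero_iff.1 (mem_iInter.1 hw i)

section ComplementConnected

variable {E : Type*} [NormedAddCommGroup E] [NormedSpace ℝ E]

theorem isConnected_compl_closedBall (h : 1 < Module.rank ℝ E) (x : E) {r : ℝ} (hr : 0 ≤ r) :
    IsConnected (closedBall x r)ᶜ := by
  have : Nontrivial E := rank_pos_iff_nontrivial.mp (zero_lt_one.trans h)
  have hpolar :
      (fun p : ℝ × E => x + p.1 • p.2) '' (Ioi r ×ˢ sphere 0 1) = (closedBall x r)ᶜ := by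
    ext w
    simp only [mem_image, mem_prod, mem_Ioi, mem_sphere_zero_iff_norm, mem_compl_iff,
      mem_closedBall, not_le, Prod.exists]
    constructor
    · rintro ⟨t, u, ⟨ht, hu⟩, rfl⟩
      rwa [dist_eq_norm, add_sub_cancel_left, norm_smul, hu, mul_one,
        Real.norm_of_nonneg (hr.trans ht.le)]
    · intro hw
      have hw0 : ‖w - x‖ ≠ 0 := by rw [← dist_eq_norm]; linarith
      refine ⟨‖w - x‖, ‖w - x‖⁻¹ • (w - x), ⟨by rwa [← dist_eq_norm], ?_⟩, ?_⟩
      · rw [norm_smul, norm_inv, norm_norm, inv_mul_cancel₀ hw0]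
      · rw [smul_smul, mul_inv_cancel₀ hw0, one_smul, add_sub_cancel]
  rw [← hpolar]
  exact (isConnected_Ioi.prod (isConnected_sphere h 0 zero_le_one)).image _ (by fun_prop)

theorem Bornology.IsBounded.isConnected_compl (h : 1 < Module.rank ℝ E) {K : Set E}
    (hK : IsBounded K) (hcomp : ∀ y ∈ Kᶜ, ¬ IsBounded (connectedComponentIn Kᶜ y)) :
    IsConnected Kᶜ := by
  obtain ⟨R, hR0, hKR⟩ := hK.subset_closedBall_lt 0 0
  have hV := isConnected_compl_closedBall h 0 hR0.le
  have hVK : (closedBall 0 R)ᶜ ⊆ Kᶜ := compl_subset_compl.2 hKR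
  obtain ⟨x, hx⟩ := hV.nonempty
  refine ⟨⟨x, hVK hx⟩, isPreconnected_of_forall x fun y hy => ?_⟩
  obtain ⟨p, hpy, hpV⟩ := not_subset.1 fun hsub => hcomp y hy (isBounded_closedBall.subset hsub)
  exact ⟨_, union_subset (connectedComponentIn_subset _ _) hVK, Or.inr hx,
    Or.inl (mem_connectedComponentIn hy),
    isPreconnected_connectedComponentIn.union p hpy hpV hV.isPreconnected⟩

end ComplementConnected

theorem stmt2_general (P : Polynomial ℂ) (hd : 2 ≤ P.natDegree) :
    (filledJulia P).Nonempty ∧ IsCompact (filledJulia P) ∧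
      IsConnected (filledJulia P)ᶜ := by
  obtain ⟨R, hR0, hR⟩ := exists_two_mul_norm_le_norm_eval hd
  have hK : filledJulia P = ⋂ k, (fun w => P.eval w)^[k] ⁻¹' closedBall 0 R :=
    setOf_isBounded_range_iterate_eq_iInter hR0 hR
  have hcompact : IsCompact (filledJulia P) :=
    hK ▸ isCompact_iInter_preimage_iterate_closedBall P.continuous R
  obtain ⟨z, hz⟩ := exists_isFixedPt_eval hd
  refine ⟨⟨z, hz.isBounded_range_iterate⟩, hcompact,
    hcompact.isBounded.isConnected_compl (by rw [Complex.rank_real_complex]; norm_num) ?_⟩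
  rw [hK]
  exact fun y hy => not_isBounded_connectedComponentIn_compl_iInter_preimage_closedBall
    (fun k => P.differentiable.iterate k) R hy

theorem stmt2 (P : Polynomial ℂ) (hP : P.Monic) (hd : 2 ≤ P.natDegree) :
    (filledJulia P).Nonempty ∧ IsCompact (filledJulia P) ∧
      IsConnected (filledJulia P)ᶜ :=
  stmt2_general P hd
end

section
/- Let U ⊆ ℂ be a domain, f_k : U → ℂ holomorphic and zero-free on U, and p' : U → ℂ holomorphic such that f_k'(z)/(n_k f_k(z)) → p'(z) locally uniformly on U, where n_k → ∞. If K ⊆ U is compact and p' has no zeros on K, then for all sufficiently large k, f_k' has no zeros in K. -/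
open Filter

theorem stmt9 (U : Set ℂ) (hU : IsOpen U) (hUconn : IsConnected U)
    (f : ℕ → ℂ → ℂ) (hf : ∀ k, DifferentiableOn ℂ (f k) U)
    (hfz : ∀ k, ∀ z ∈ U, f k z ≠ 0)
    (p' : ℂ → ℂ) (hp : DifferentiableOn ℂ p' U)
    (n : ℕ → ℕ) (hn : Tendsto n atTop atTop)
    (hconv : ∀ K : Set ℂ, IsCompact K → K ⊆ U →
      TendstoUniformlyOn (fun k z => deriv (f k) z / ((n k : ℂ) * f k z)) p' atTop K)
    (K : Set ℂ) (hK : IsCompact K) (hKU : K ⊆ U) (hpz : ∀ z ∈ K, p' z ≠ 0) :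
    ∃ k₀ : ℕ, ∀ k ≥ k₀, ∀ z ∈ K, deriv (f k) z ≠ 0 := by
  rcases K.eq_empty_or_nonempty with hKe | hKne
  · exact ⟨0, fun k _ z hz => absurd hz (hKe ▸ Set.notMem_empty z)⟩
  obtain ⟨z₀, hz₀K, hz₀min⟩ := hK.exists_isMinOn hKne
    ((hp.continuousOn.mono hKU).norm)
  set ε := ‖p' z₀‖ with hε
  have hεpos : 0 < ε := norm_pos_iff.mpr (hpz z₀ hz₀K)
  have h := (Metric.tendstoUniformlyOn_iff.mp (hconv K hK hKU)) ε hεpos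
  rw [eventually_atTop] at h
  obtain ⟨k₀, hk₀⟩ := h
  refine ⟨k₀, fun k hk z hz hder => ?_⟩
  have := hk₀ k hk z hz
  simp only [hder, zero_div] at this
  have : dist (p' z) 0 < ε := this
  rw [dist_zero_right] at this
  exact absurd this (not_lt.mpr (hz₀min hz))
end

section
/- Let W ⊆ ℂ be a domain, h_k harmonic on W, and h harmonic on W. Let E ⊂ W be a discrete (no accumulation points in W) set, and suppose h_k → h locally uniformly on W \ E. Then h_k → h locally uniformly on all of W. (Removable exceptional set via the maximum principle.) -/
open Filter

/-- `f` is harmonic on `U`: twice continuously differentiable with vanishing Laplacian. -/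
def HarmonicOnSet (f : ℂ → ℝ) (U : Set ℂ) : Prop :=
  ContDiffOn ℝ 2 f U ∧
  ∀ z ∈ U, fderiv ℝ (fun w => fderiv ℝ f w 1) z 1 +
    fderiv ℝ (fun w => fderiv ℝ f w Complex.I) z Complex.I = 0

/-!
By the mean value property, a harmonic function is bounded in absolute value at the centre of a
circle by its supremum on that circle; apply this to `g - h k`. A point `z ∈ W` is not an
accumulation point of `E`, so some closed disc around `z` lies in `W` and meets `E` at most in `z`.
Circles of radius `r / 2` centred in `ball z (r / 4)` lie in the annulus `r / 4 ≤ |w - z| ≤ r`, a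
compact subset of `W \ E`, so `h k → g` uniformly on `ball z (r / 4)`. Locally uniform convergence
on the open set `W` is uniform convergence on its compact subsets.
-/

open InnerProductSpace Metric Real Set

theorem HarmonicOnSet.harmonicOnNhd {f : ℂ → ℝ} {W : Set ℂ} (hf : HarmonicOnSet f W)
    (hW : IsOpen W) : HarmonicOnNhd f W := by
  intro x hx
  refine ⟨hf.1.contDiffAt (hW.mem_nhds hx), ?_⟩
  filter_upwards [hW.mem_nhds hx] with y hy
  have hdiff : DifferentiableAt ℝ (fderiv ℝ f) y :=
    ((hf.1.fderiv_of_isOpen (m := 1) hW (by norm_num)).differentiableOn (by norm_num) y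
      hy).differentiableAt (hW.mem_nhds hy)
  have hlap := hf.2 y hy
  rw [fderiv_clm_apply hdiff (differentiableAt_const _),
    fderiv_clm_apply hdiff (differentiableAt_const _)] at hlap
  simpa [laplacian_eq_iteratedFDeriv_complexPlane, iteratedFDeriv_two_apply] using hlap

theorem InnerProductSpace.HarmonicOnNhd.abs_le_of_forall_mem_sphere {u : ℂ → ℝ} {c : ℂ}
    {R a : ℝ} (hu : HarmonicOnNhd u (closedBall c |R|)) (h : ∀ x ∈ sphere c |R|, |u x| ≤ a) :
    |u c| ≤ a := by
  have hint : CircleIntegrable |u| c R :=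
    ((hu.continuousOn.mono sphere_subset_closedBall).abs).circleIntegrable'
  rw [← hu.circleAverage_eq]
  exact abs_circleAverage_le_circleAverage_abs.trans (circleAverage_mono_on_of_le_circle hint h)

theorem InnerProductSpace.HarmonicOnNhd.tendstoUniformlyOn_of_forall_sphere_subset {ι : Type*}
    {p : Filter ι} {F : ι → ℂ → ℝ} {f : ℂ → ℝ} {U A S : Set ℂ} {R : ℝ}
    (hF : ∀ i, HarmonicOnNhd (F i) U) (hf : HarmonicOnNhd f U)
    (hA : TendstoUniformlyOn F f p A) (hS : ∀ c ∈ S, closedBall c |R| ⊆ U ∧ sphere c |R| ⊆ A) :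
    TendstoUniformlyOn F f p S := by
  rw [Metric.tendstoUniformlyOn_iff] at hA ⊢
  intro ε hε
  filter_upwards [hA (ε / 2) (half_pos hε)] with i hi c hc
  have hdiff : HarmonicOnNhd (f - F i) (closedBall c |R|) :=
    fun x hx => (hf x ((hS c hc).1 hx)).sub (hF i x ((hS c hc).1 hx))
  have hbound : |(f - F i) c| ≤ ε / 2 :=
    hdiff.abs_le_of_forall_mem_sphere fun x hx => (hi x ((hS c hc).2 hx)).le
  rw [Real.dist_eq]
  exact hbound.trans_lt (half_lt_self hε)

theorem exists_closedBall_subset_of_not_accPt {X : Type*} [PseudoMetricSpace X] {W E : Set X}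
    {z : X} (hW : W ∈ nhds z) (hz : ¬AccPt z (𝓟 E)) :
    ∃ r > 0, closedBall z r ⊆ W ∧ closedBall z r ∩ E ⊆ {z} := by
  rw [accPt_iff_frequently, not_frequently] at hz
  obtain ⟨ε, hε, hball⟩ := Metric.mem_nhds_iff.1 (inter_mem hW hz)
  refine ⟨ε / 2, half_pos hε, fun x hx => (hball ?_).1, fun x hx => ?_⟩
  · exact closedBall_subset_ball (half_lt_self hε) hx
  · by_contra hxz
    exact (hball (closedBall_subset_ball (half_lt_self hε) hx.1)).2 ⟨hxz, hx.2⟩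

theorem closedBall_subset_and_sphere_subset_annulus {X : Type*} [PseudoMetricSpace X] {z c : X}
    {r : ℝ} (hc : c ∈ ball z (r / 4)) :
    closedBall c (r / 2) ⊆ closedBall z r ∧ sphere c (r / 2) ⊆ closedBall z r \ ball z (r / 4) := by
  rw [mem_ball] at hc
  have hr : 0 ≤ r := by linarith [dist_nonneg (x := c) (y := z)]
  refine ⟨fun x hx => ?_, fun x hx => ⟨?_, ?_⟩⟩
  · rw [mem_closedBall] at hx ⊢
    linarith [dist_triangle x c z]
  · rw [mem_sphere] at hx
    rw [mem_closedBall]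
    linarith [dist_triangle x c z]
  · rw [mem_sphere] at hx
    rw [mem_ball, not_lt]
    linarith [dist_triangle x z c, dist_comm c z]

theorem stmt10_general (W : Set ℂ) (hW : IsOpen W)
    (h : ℕ → ℂ → ℝ) (g : ℂ → ℝ)
    (hhk : ∀ k, HarmonicOnSet (h k) W) (hg : HarmonicOnSet g W)
    (E : Set ℂ) (hEacc : ∀ z ∈ W, ¬ AccPt z (Filter.principal E))
    (hconv : ∀ K : Set ℂ, IsCompact K → K ⊆ W \ E →
      TendstoUniformlyOn (fun k => h k) g atTop K) :
    ∀ K : Set ℂ, IsCompact K → K ⊆ W → TendstoUniformlyOn (fun k => h k) g atTop K := by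
  intro K hK hKW
  refine (tendstoLocallyUniformlyOn_iff_forall_isCompact hW).1 ?_ K hKW hK
  refine tendstoLocallyUniformlyOn_of_forall_exists_nhds fun z hz => ?_
  obtain ⟨r, hr, hrW, hrE⟩ := exists_closedBall_subset_of_not_accPt (hW.mem_nhds hz) (hEacc z hz)
  have hannulus : closedBall z r \ ball z (r / 4) ⊆ W \ E := fun x hx =>
    ⟨hrW hx.1, fun hxE => hx.2 (by
      rw [hrE ⟨hx.1, hxE⟩]; exact mem_ball_self (by positivity))⟩
  refine ⟨ball z (r / 4), mem_nhdsWithin_of_mem_nhds (ball_mem_nhds z (by positivity)), ?_⟩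
  refine HarmonicOnNhd.tendstoUniformlyOn_of_forall_sphere_subset (R := r / 2)
    (fun k => (hhk k).harmonicOnNhd hW) (hg.harmonicOnNhd hW)
    (hconv _ ((isCompact_closedBall z r).diff isOpen_ball) hannulus) fun c hc => ?_
  rw [abs_of_pos (by positivity)]
  obtain ⟨hball, hsphere⟩ := closedBall_subset_and_sphere_subset_annulus hc
  exact ⟨hball.trans hrW, hsphere⟩

theorem stmt10 (W : Set ℂ) (hW : IsOpen W) (hWconn : IsConnected W)
    (h : ℕ → ℂ → ℝ) (g : ℂ → ℝ)
    (hhk : ∀ k, HarmonicOnSet (h k) W) (hg : HarmonicOnSet g W)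
    (E : Set ℂ) (hE : E ⊆ W) (hEacc : ∀ z ∈ W, ¬ AccPt z (Filter.principal E))
    (hconv : ∀ K : Set ℂ, IsCompact K → K ⊆ W \ E →
      TendstoUniformlyOn (fun k => h k) g atTop K) :
    ∀ K : Set ℂ, IsCompact K → K ⊆ W → TendstoUniformlyOn (fun k => h k) g atTop K :=
  stmt10_general W hW h g hhk hg E hEacc hconv
end

section
/- Let U ⊂ ℂ be open with convex complement V = ℂ \ U, and suppose V is bounded or more generally every connected component of U is unbounded. Then for any Borel probability measure μ with compact support contained in V, the harmonic function p_μ is non-constant on every connected component of U and p_μ' is zero-free on U. -/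
/-!
Let `z ∈ U` and let `v` be the point of the closed convex set `V` nearest to `z`. Every `w ∈ V`
satisfies `⟪z - v, w - v⟫ ≤ 0`, hence `⟪z - v, z - w⟫ ≥ ‖z - v‖² > 0`, i.e.
`Re ((z - v) / (z - w)) > 0`. Integrating over `supp μ ⊆ V` shows that `(z - v) · p_μ'(z)` has
positive real part. For non-constancy, `p_μ(y) ≥ log dist(y, supp μ)`, which is unbounded along
the unbounded component of `z`.
-/

open MeasureTheory

theorem integral_pos_of_ae_pos {α : Type*} [MeasurableSpace α] {μ : Measure α} [NeZero μ]
    {f : α → ℝ} (hf : ∀ᵐ x ∂μ, 0 < f x) (hfi : Integrable f μ) : 0 < ∫ x, f x ∂μ := by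
  rw [integral_pos_iff_support_of_nonneg_ae (hf.mono fun _ hx => hx.le) hfi]
  have hsupp : Function.support f ∈ ae μ := hf.mono fun _ hx => hx.ne'
  rw [measure_congr (ae_eq_univ.mpr (mem_ae_iff.mp hsupp))]
  exact Measure.measure_univ_pos.mpr (NeZero.ne μ)

theorem ContinuousOn.integrable_of_measure_compl_eq_zero {α E : Type*} [MeasurableSpace α]
    [TopologicalSpace α] [T2Space α] [OpensMeasurableSpace α] [NormedAddCommGroup E] {μ : Measure α}
    [IsFiniteMeasure μ] {f : α → E} {S : Set α} (hf : ContinuousOn f S) (hS : IsCompact S)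
    (hsupp : μ Sᶜ = 0) : Integrable f μ := by
  rw [← Measure.restrict_eq_self_of_ae_mem (mem_ae_iff.mpr hsupp)]
  exact hf.integrableOn_compact hS

theorem inner_sub_pos_of_inner_sub_nonpos {F : Type*} [NormedAddCommGroup F]
    [InnerProductSpace ℝ F] {z v w : F} (hzv : z ≠ v) (h : inner ℝ (z - v) (w - v) ≤ 0) :
    0 < inner ℝ (z - v) (z - w) := by
  have hsplit : z - w = (z - v) - (w - v) := by abel
  rw [hsplit, inner_sub_right, real_inner_self_eq_norm_sq]
  have : 0 < ‖z - v‖ := norm_pos_iff.mpr (sub_ne_zero.mpr hzv)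
  nlinarith

theorem Complex.re_div_pos_of_inner_pos {a b : ℂ} (h : 0 < inner ℝ a b) : 0 < (a / b).re := by
  rw [Complex.inner] at h
  have hb : b ≠ 0 := by rintro rfl; simp at h
  rw [Complex.div_re, ← add_div]
  refine div_pos ?_ (Complex.normSq_pos.mpr hb)
  simpa [mul_comm] using h

theorem integral_inv_sub_ne_zero_of_notMem_convex {V : Set ℂ} (hVcv : Convex ℝ V)
    (hVc : IsClosed V) {μ : Measure ℂ} [IsFiniteMeasure μ] [NeZero μ] {S : Set ℂ}
    (hS : IsCompact S) (hSV : S ⊆ V) (hsupp : μ Sᶜ = 0) {z : ℂ} (hz : z ∉ V) :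
    ∫ w, (z - w)⁻¹ ∂μ ≠ 0 := by
  have hSne : S.Nonempty := by
    by_contra h
    rw [Set.not_nonempty_iff_eq_empty.mp h, Set.compl_empty] at hsupp
    exact NeZero.ne μ (Measure.measure_univ_eq_zero.mp hsupp)
  obtain ⟨v, hvV, hvmin⟩ := exists_norm_eq_iInf_of_complete_convex (hSne.mono hSV)
    hVc.isComplete hVcv z
  have hproj := (norm_eq_iInf_iff_real_inner_le_zero hVcv hvV).mp hvmin
  have hzv : z ≠ v := fun h => hz (h ▸ hvV)
  have hzS : ∀ w ∈ S, z - w ≠ 0 := fun w hw h => hz (sub_eq_zero.mp h ▸ hSV hw)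
  have hint : Integrable (fun w => (z - w)⁻¹) μ :=
    ((continuous_const.sub continuous_id).continuousOn.inv₀ hzS
      ).integrable_of_measure_compl_eq_zero hS hsupp
  have hpos : 0 < ∫ w, ((z - v) / (z - w)).re ∂μ := by
    refine integral_pos_of_ae_pos ?_ (by simpa [div_eq_mul_inv] using (hint.const_mul (z - v)).re)
    filter_upwards [mem_ae_iff.mpr hsupp] with w hw
    exact Complex.re_div_pos_of_inner_pos (inner_sub_pos_of_inner_sub_nonpos hzv (hproj w (hSV hw)))
  intro hzero
  have hre : ∫ w, ((z - v) / (z - w)).re ∂μ = ((z - v) * ∫ w, (z - w)⁻¹ ∂μ).re := by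
    rw [← integral_const_mul]
    exact integral_re (hint.const_mul _)
  rw [hre, hzero, mul_zero, Complex.zero_re] at hpos
  exact hpos.false

theorem log_le_integral_log_norm_sub {E : Type*} [NormedAddCommGroup E] [MeasurableSpace E]
    [OpensMeasurableSpace E] {μ : Measure E} [IsProbabilityMeasure μ] {S : Set E}
    (hS : IsCompact S) (hsupp : μ Sᶜ = 0) {y : E} {r : ℝ} (hr : 0 < r)
    (hy : ∀ w ∈ S, r ≤ ‖y - w‖) : Real.log r ≤ ∫ w, Real.log ‖y - w‖ ∂μ := by
  have hint : Integrable (fun w => Real.log ‖y - w‖) μ := by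
    refine ContinuousOn.integrable_of_measure_compl_eq_zero ?_ hS hsupp
    exact (continuous_const.sub continuous_id).norm.continuousOn.log
      fun w hw => (hr.trans_le (hy w hw)).ne'
  calc Real.log r = ∫ _, Real.log r ∂μ := by simp
    _ ≤ ∫ w, Real.log ‖y - w‖ ∂μ := by
      refine integral_mono_ae (integrable_const _) hint ?_
      filter_upwards [mem_ae_iff.mpr hsupp] with w hw
      exact Real.log_le_log hr (hy w hw)

theorem exists_mem_forall_lt_norm_sub_of_not_isBounded {E : Type*} [SeminormedAddCommGroup E]
    {S A : Set E} (hS : Bornology.IsBounded S) (hA : ¬ Bornology.IsBounded A) (r : ℝ) :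
    ∃ y ∈ A, ∀ w ∈ S, r < ‖y - w‖ := by
  obtain ⟨C, hC⟩ := isBounded_iff_forall_norm_le.mp hS
  rw [isBounded_iff_forall_norm_le] at hA
  push Not at hA
  obtain ⟨y, hyA, hy⟩ := hA (C + r)
  refine ⟨y, hyA, fun w hw => ?_⟩
  linarith [norm_sub_norm_le y w, hC w hw]

theorem stmt11 (U : Set ℂ) (hU : IsOpen U)
    (V : Set ℂ) (hV : V = Uᶜ) (hVcv : Convex ℝ V)
    (hcomp : ∀ z ∈ U, ¬ Bornology.IsBounded (connectedComponentIn U z))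
    (μ : Measure ℂ) [IsProbabilityMeasure μ]
    (S : Set ℂ) (hS : IsCompact S) (hSV : S ⊆ V) (hsupp : μ Sᶜ = 0) :
    (∀ z ∈ U, (∫ w, (z - w)⁻¹ ∂μ) ≠ 0) ∧
    ∀ z ∈ U, ∃ x ∈ connectedComponentIn U z, ∃ y ∈ connectedComponentIn U z,
      (∫ w, Real.log (‖x - w‖) ∂μ) ≠
        ∫ w, Real.log (‖y - w‖) ∂μ := by
  subst hV
  refine ⟨fun z hz => integral_inv_sub_ne_zero_of_notMem_convex hVcv hU.isClosed_compl hS hSV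
    hsupp (Set.notMem_compl_iff.mpr hz), fun z hz => ?_⟩
  set p : ℂ → ℝ := fun x => ∫ w, Real.log ‖x - w‖ ∂μ
  obtain ⟨y, hy, hfar⟩ := exists_mem_forall_lt_norm_sub_of_not_isBounded hS.isBounded
    (hcomp z hz) (Real.exp (p z + 1))
  refine ⟨z, mem_connectedComponentIn hz, y, hy, ne_of_lt ?_⟩
  calc p z < Real.log (Real.exp (p z + 1)) := by rw [Real.log_exp]; linarith
    _ ≤ p y := log_le_integral_log_norm_sub hS hsupp (Real.exp_pos _) fun w hw => (hfar w hw).le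
end

section
/- Let γ be a piecewise C¹ curve in ℂ \ supp μ from z₀ to z₁, where μ is a finite compactly supported Borel measure. Then p_μ(z₁) = p_μ(z₀) + Re(∫_γ p_μ'(ζ) dζ), where p_μ' is the Cauchy transform of μ. -/
open MeasureTheory

/-- The (topological) support of a measure: points all of whose neighbourhoods
have positive measure. -/
def msupport (μ : Measure ℂ) : Set ℂ := {x : ℂ | ∀ V ∈ nhds x, μ V ≠ 0}

/-!
Off the support of `μ`, the integrand `log ‖z - w‖` has real derivative
`h ↦ Re (h / (z - w))`, bounded uniformly in `w ∈ supp μ` for `z` near a point off the support.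
Differentiating under the integral sign shows that `p_μ` is real-differentiable there with
derivative `h ↦ Re (p_μ'(z) h)`, so `t ↦ p_μ (γ t)` has the continuous derivative
`Re (p_μ'(γ t) γ'(t))` and the fundamental theorem of calculus concludes. All integrands are
continuous on the compact support, which carries the whole mass of `μ`, hence integrable.
-/

open Metric Filter

lemma msupport_eq_support (μ : Measure ℂ) : msupport μ = μ.support := by
  ext x
  simp [msupport, Measure.mem_support_iff_forall, pos_iff_ne_zero]

lemma isClosed_msupport (μ : Measure ℂ) : IsClosed (msupport μ) :=
  msupport_eq_support μ ▸ Measure.isClosed_support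

lemma ae_mem_msupport (μ : Measure ℂ) : ∀ᵐ w ∂μ, w ∈ msupport μ :=
  msupport_eq_support μ ▸ Measure.support_mem_ae

lemma integrable_of_continuousOn_msupport {E : Type*} [NormedAddCommGroup E]
    {μ : Measure ℂ} [IsFiniteMeasureOnCompacts μ] (hS : IsCompact (msupport μ)) {f : ℂ → E}
    (hf : ContinuousOn f (msupport μ)) : Integrable f μ := by
  simpa [IntegrableOn, Measure.restrict_eq_self_of_ae_mem (ae_mem_msupport μ)]
    using hf.integrableOn_compact (μ := μ) hS

lemma IsClosed.exists_pos_forall_le_dist {X : Type*} [PseudoMetricSpace X] {s : Set X}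
    (hs : IsClosed s) {x : X} (hx : x ∉ s) : ∃ ε > 0, ∀ y ∈ ball x ε, ∀ w ∈ s, ε ≤ dist y w := by
  obtain ⟨r, hr, hball⟩ := Metric.isOpen_iff.1 hs.isOpen_compl x hx
  refine ⟨r / 2, by positivity, fun y hy w hw => ?_⟩
  have hxw : r ≤ dist x w := le_of_not_gt fun h => hball (mem_ball'.2 h) hw
  linarith [dist_triangle x y w, mem_ball'.1 hy]

lemma hasFDerivAt_log_norm {z : ℂ} (hz : z ≠ 0) :
    HasFDerivAt (fun u : ℂ => Real.log ‖u‖)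
      (Complex.reCLM.comp (ContinuousLinearMap.mul ℝ ℂ z⁻¹)) z := by
  have hsq := ((hasStrictFDerivAt_norm_sq z).hasFDerivAt.log (by simpa using hz)).const_mul
    (1 / 2 : ℝ)
  have hlog : (fun u : ℂ => Real.log ‖u‖) = fun u => 1 / 2 * Real.log (‖u‖ ^ 2) := by
    ext u; rw [Real.log_pow]; push_cast; ring
  rw [hlog]
  refine hsq.congr_fderiv (ContinuousLinearMap.ext fun h => ?_)
  simp only [one_div, smul_apply, coe_innerSL_apply, Complex.inner, Complex.mul_re,
    Complex.conj_re, Complex.conj_im, mul_neg, sub_neg_eq_add, smul_add, nsmul_eq_mul,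
    Nat.cast_ofNat, smul_eq_mul, ContinuousLinearMap.comp_apply, ContinuousLinearMap.mul_apply',
    Complex.reCLM_apply, Complex.inv_re, Complex.normSq_eq_norm_sq, Complex.inv_im]
  field_simp
  ring

noncomputable def logPotential (μ : Measure ℂ) (z : ℂ) : ℝ := ∫ w, Real.log ‖z - w‖ ∂μ

noncomputable def cauchyTransform (μ : Measure ℂ) (z : ℂ) : ℂ := ∫ w, (z - w)⁻¹ ∂μ

section

variable {μ : Measure ℂ} {z : ℂ}

lemma exists_pos_forall_norm_inv_sub_le (hz : z ∉ msupport μ) :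
    ∃ ε > 0, ∀ y ∈ ball z ε, ∀ w ∈ msupport μ, y - w ≠ 0 ∧ ‖(y - w)⁻¹‖ ≤ ε⁻¹ := by
  obtain ⟨ε, hε, hdist⟩ := (isClosed_msupport μ).exists_pos_forall_le_dist hz
  refine ⟨ε, hε, fun y hy w hw => ?_⟩
  have hle : ε ≤ ‖y - w‖ := dist_eq_norm y w ▸ hdist y hy w hw
  exact ⟨norm_pos_iff.1 (hε.trans_le hle), norm_inv (y - w) ▸ inv_anti₀ hε hle⟩

variable [IsFiniteMeasure μ]

lemma continuousAt_cauchyTransform (hz : z ∉ msupport μ) :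
    ContinuousAt (cauchyTransform μ) z := by
  obtain ⟨ε, hε, hbound⟩ := exists_pos_forall_norm_inv_sub_le hz
  refine continuousAt_of_dominated (bound := fun _ => ε⁻¹) (Eventually.of_forall fun y =>
      (by fun_prop : Measurable fun w : ℂ => (y - w)⁻¹).aestronglyMeasurable)
    ?_ (integrable_const _) ?_
  · filter_upwards [ball_mem_nhds z hε] with y hy
    filter_upwards [ae_mem_msupport μ] with w hw using (hbound y hy w hw).2
  · filter_upwards [ae_mem_msupport μ] with w hw
    exact (continuous_id.sub continuous_const).continuousAt.inv₀
      (hbound z (mem_ball_self hε) w hw).1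

lemma hasFDerivAt_logPotential (hS : IsCompact (msupport μ)) (hz : z ∉ msupport μ) :
    HasFDerivAt (logPotential μ)
      (Complex.reCLM.comp (ContinuousLinearMap.mul ℝ ℂ (cauchyTransform μ z))) z := by
  obtain ⟨ε, hε, hbound⟩ := exists_pos_forall_norm_inv_sub_le hz
  set L : ℂ →L[ℝ] ℂ →L[ℝ] ℝ :=
    (ContinuousLinearMap.compL ℝ ℂ ℂ ℝ Complex.reCLM).comp (ContinuousLinearMap.mul ℝ ℂ)
  have hne : ∀ w ∈ msupport μ, z - w ≠ 0 := fun w hw => (hbound z (mem_ball_self hε) w hw).1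
  have hint : Integrable (fun w => (z - w)⁻¹) μ :=
    integrable_of_continuousOn_msupport hS fun w hw =>
      (continuous_const.sub continuous_id).continuousAt.continuousWithinAt.inv₀ (hne w hw)
  have hderiv := hasFDerivAt_integral_of_dominated_of_fderiv_le (μ := μ)
    (F := fun y w => Real.log ‖y - w‖) (F' := fun y w => L (y - w)⁻¹) (bound := fun _ => ε⁻¹)
    (ball_mem_nhds z hε)
    (Eventually.of_forall fun y =>
      (by fun_prop : Measurable fun w : ℂ => Real.log ‖y - w‖).aestronglyMeasurable)
    (integrable_of_continuousOn_msupport hS fun w hw =>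
      (continuous_const.sub continuous_id).norm.continuousAt.continuousWithinAt.log
        (norm_ne_zero_iff.2 (hne w hw)))
    (L.continuous.comp_aestronglyMeasurable hint.aestronglyMeasurable) ?_ (integrable_const _) ?_
  · rwa [L.integral_comp_comm hint] at hderiv
  · filter_upwards [ae_mem_msupport μ] with w hw y hy
    calc ‖L (y - w)⁻¹‖ ≤ ‖(y - w)⁻¹‖ := by
          refine ContinuousLinearMap.opNorm_le_bound _ (norm_nonneg _) fun h => ?_
          simpa [L] using Complex.abs_re_le_norm ((y - w)⁻¹ * h)
      _ ≤ ε⁻¹ := (hbound y hy w hw).2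
  · filter_upwards [ae_mem_msupport μ] with w hw y hy
    exact (hasFDerivAt_log_norm (hbound y hy w hw).1).comp y ((hasFDerivAt_id y).sub_const w)

end

theorem stmt12 (μ : Measure ℂ) [IsFiniteMeasure μ] (hS : IsCompact (msupport μ))
    (γ γ' : ℝ → ℂ) (z₀ z₁ : ℂ) (h0 : γ 0 = z₀) (h1 : γ 1 = z₁)
    (hγ : ∀ t ∈ Set.Icc (0 : ℝ) 1, HasDerivAt γ (γ' t) t)
    (hγ' : ContinuousOn γ' (Set.Icc (0 : ℝ) 1))
    (havoid : ∀ t ∈ Set.Icc (0 : ℝ) 1, γ t ∉ msupport μ) :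
    (∫ w, Real.log (‖z₁ - w‖) ∂μ) =
      (∫ w, Real.log (‖z₀ - w‖) ∂μ) +
        (∫ t in (0 : ℝ)..1, (∫ w, (γ t - w)⁻¹ ∂μ) * γ' t).re := by
  change logPotential μ z₁ =
    logPotential μ z₀ + (∫ t in (0 : ℝ)..1, cauchyTransform μ (γ t) * γ' t).re
  have hderiv : ∀ t ∈ Set.uIcc (0 : ℝ) 1,
      HasDerivAt (logPotential μ ∘ γ) (cauchyTransform μ (γ t) * γ' t).re t := by
    intro t ht
    rw [Set.uIcc_of_le zero_le_one] at ht
    exact (hasFDerivAt_logPotential hS (havoid t ht)).comp_hasDerivAt t (hγ t ht)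
  have hint : IntervalIntegrable (fun t => cauchyTransform μ (γ t) * γ' t) volume 0 1 := by
    refine ContinuousOn.intervalIntegrable_of_Icc zero_le_one
      (ContinuousOn.mul (fun t ht => ?_) hγ')
    exact (continuousAt_cauchyTransform (havoid t ht)).comp_continuousWithinAt
      (hγ t ht).continuousAt.continuousWithinAt
  have hre : (∫ t in (0 : ℝ)..1, cauchyTransform μ (γ t) * γ' t).re =
      ∫ t in (0 : ℝ)..1, (cauchyTransform μ (γ t) * γ' t).re :=
    (intervalIntegral.intervalIntegral_re hint).symm
  rw [← h0, ← h1, hre,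
    intervalIntegral.integral_eq_sub_of_hasDerivAt hderiv ⟨hint.1.re, hint.2.re⟩]
  simp only [Function.comp_apply, add_sub_cancel]
end

section
/- Let U ⊆ ℂ be open and let ξ_k, ξ be divisors on U (integer-valued functions whose support has no accumulation point in U). Suppose ξ_k → ξ in the weak* sense (ξ_k(f) → ξ(f) for all continuous compactly supported f : U → ℝ), all ξ_k and ξ nonnegative. If C ⊆ U is compact with supp ξ ∩ ∂C = ∅, then for k large, Σ_{z ∈ C} ξ_k(z) = Σ_{z ∈ C} ξ(z). -/
open Filter Set Function Topology

/-- A set with no accumulation points in `U` meets each compact subset of `U`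
in a finite set. -/
lemma aux_fin_inter_compact {S : Set ℂ} {U : Set ℂ}
    (hdiv : ∀ z ∈ U, ¬ AccPt z (Filter.principal S))
    {K : Set ℂ} (hK : IsCompact K) (hKU : K ⊆ U) :
    (S ∩ K).Finite := by
  have h : ∀ z : ℂ, ∃ N ∈ 𝓝 z, z ∈ K → ∀ y ∈ N ∩ S, y = z := by
    intro z
    by_cases hz : z ∈ K
    · have h1 := hdiv z (hKU hz)
      rw [accPt_iff_nhds] at h1
      push_neg at h1
      obtain ⟨N, hN, h2⟩ := h1
      exact ⟨N, hN, fun _ y hy => h2 y hy⟩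
    · exact ⟨univ, univ_mem, fun h' => absurd h' hz⟩
  choose N hN h2 using h
  obtain ⟨t, htK, hcov⟩ := hK.elim_nhds_subcover N (fun x _ => hN x)
  apply Set.Finite.subset t.finite_toSet
  rintro y ⟨hyS, hyK⟩
  obtain ⟨x, hxt, hyx⟩ := Set.mem_iUnion₂.mp (hcov hyK)
  have : y = x := h2 x (htK x hxt) y ⟨hyx, hyS⟩
  simpa [this] using hxt

/-- If `S` has no accumulation points in `U`, then `closure S ∩ U ⊆ S`. -/
lemma aux_closure_inter {S : Set ℂ} {U : Set ℂ}
    (hdiv : ∀ z ∈ U, ¬ AccPt z (Filter.principal S)) :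
    closure S ∩ U ⊆ S := by
  rintro z ⟨hzc, hzU⟩
  by_contra hz
  apply hdiv z hzU
  rw [accPt_iff_nhds]
  intro N hN
  obtain ⟨y, hy1, hy2⟩ := mem_closure_iff_nhds.mp hzc N hN
  exact ⟨y, ⟨hy1, hy2⟩, fun h => hz (h ▸ hy2)⟩

theorem stmt16 (U : Set ℂ) (hU : IsOpen U)
    (ξs : ℕ → ℂ → ℤ) (ξ : ℂ → ℤ)
    (hout : ∀ k, ∀ z ∉ U, ξs k z = 0) (houtξ : ∀ z ∉ U, ξ z = 0)
    (hdiv : ∀ k, ∀ z ∈ U, ¬ AccPt z (Filter.principal (Function.support (ξs k))))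
    (hdivξ : ∀ z ∈ U, ¬ AccPt z (Filter.principal (Function.support ξ)))
    (hnn : ∀ k z, 0 ≤ ξs k z) (hnnξ : ∀ z, 0 ≤ ξ z)
    (hconv : ∀ f : ℂ → ℝ, Continuous f → HasCompactSupport f → tsupport f ⊆ U →
      Tendsto (fun k => ∑ᶠ z, (ξs k z : ℝ) * f z) atTop
        (nhds (∑ᶠ z, (ξ z : ℝ) * f z)))
    (C : Set ℂ) (hC : IsCompact C) (hCU : C ⊆ U)
    (hbd : ∀ z ∈ frontier C, ξ z = 0) :
    ∀ᶠ k in atTop, (∑ᶠ z ∈ C, ξs k z) = ∑ᶠ z ∈ C, ξ z := by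
  classical
  set Z := Function.support ξ with hZ
  have hCclosed : IsClosed C := hC.isClosed
  have hfrC : frontier C ⊆ C := hCclosed.frontier_subset
  have hfrU : frontier C ⊆ U := hfrC.trans hCU
  -- W : open set around frontier C avoiding the support of ξ
  set W : Set ℂ := U ∩ (closure Z)ᶜ with hW
  have hWopen : IsOpen W := hU.inter isClosed_closure.isOpen_compl
  have hWZ : ∀ z ∈ W, ξ z = 0 := by
    intro z hz
    by_contra h
    exact hz.2 (subset_closure (h : z ∈ Z))
  have hfrW : frontier C ⊆ W := by
    intro z hz
    refine ⟨hfrU hz, fun hc => ?_⟩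
    have hzZ : z ∈ Z := aux_closure_inter hdivξ ⟨hc, hfrU hz⟩
    exact hzZ (hbd z hz)
  have hfrcompact : IsCompact (frontier C) :=
    hC.of_isClosed_subset isClosed_frontier hfrC
  -- nested compact sets between frontier C and W
  obtain ⟨L, hLc, hfrL, hLW⟩ := exists_compact_between hfrcompact hWopen hfrW
  obtain ⟨M, hMc, hLM, hMW⟩ :=
    exists_compact_between hLc hWopen hLW
  -- bump function f : 1 on L, supported in M
  obtain ⟨f, hf1, hf0, hfcs, hf01⟩ :=
    exists_continuous_one_zero_of_isCompact hLc isOpen_interior.isClosed_compl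
      (disjoint_compl_right_iff_subset.mpr hLM)
  have hfsupp : Function.support (f : ℂ → ℝ) ⊆ interior M := by
    intro z hz
    by_contra h
    exact hz (hf0 h)
  have hftsupp : tsupport (f : ℂ → ℝ) ⊆ M := by
    have : closure (Function.support (f : ℂ → ℝ)) ⊆ closure (interior M) :=
      closure_mono hfsupp
    exact this.trans ((closure_mono interior_subset).trans hMc.isClosed.closure_subset)
  have hftU : tsupport (f : ℂ → ℝ) ⊆ U := hftsupp.trans (hMW.trans (inter_subset_left))
  -- the limit for f is 0
  have hflim0 : (∑ᶠ z, (ξ z : ℝ) * f z) = 0 := by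
    have : ∀ z, (ξ z : ℝ) * f z = 0 := by
      intro z
      by_cases hz : f z = 0
      · simp [hz]
      · have : z ∈ W := hMW (hftsupp (subset_closure (hz : z ∈ Function.support (f : ℂ → ℝ))))
        simp [hWZ z this]
    simp only [this, finsum_zero]
  have hfconv := hconv f f.continuous hfcs hftU
  rw [hflim0] at hfconv
  have E1 : ∀ᶠ k in atTop, (∑ᶠ z, (ξs k z : ℝ) * f z) < 1 :=
    hfconv.eventually_lt_const one_pos
  -- eventual vanishing of ξs k on interior L
  have hvanish : ∀ᶠ k in atTop, ∀ z ∈ interior L, ξs k z = 0 := by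
    filter_upwards [E1] with k hk
    intro z hz
    by_contra h
    have h1 : (1 : ℤ) ≤ ξs k z := lt_of_le_of_ne (hnn k z) (Ne.symm h)
    have hfz : f z = 1 := hf1 (interior_subset hz)
    have hfin : (Function.support fun z => (ξs k z : ℝ) * f z).Finite := by
      apply Set.Finite.subset
        (aux_fin_inter_compact (hdiv k) hfcs hftU)
      intro y hy
      have h1 : ξs k y ≠ 0 := by
        intro h0; apply hy; simp [h0]
      have h2 : f y ≠ 0 := by
        intro h0; apply hy; simp [h0]
      exact ⟨h1, subset_closure h2⟩
    have hle : (ξs k z : ℝ) * f z ≤ ∑ᶠ w, (ξs k w : ℝ) * f w :=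
      single_le_finsum z hfin fun j =>
        mul_nonneg (by exact_mod_cast hnn k j) (hf01 j).1
    rw [hfz, mul_one] at hle
    have : (1 : ℝ) ≤ ∑ᶠ w, (ξs k w : ℝ) * f w :=
      le_trans (by exact_mod_cast h1) hle
    linarith
  -- bump function g : 1 on C, supported in interior C ∪ interior L
  set O : Set ℂ := interior C ∪ interior L with hO
  have hOopen : IsOpen O := isOpen_interior.union isOpen_interior
  have hCO : C ⊆ O := by
    intro z hz
    by_cases h : z ∈ interior C
    · exact Or.inl h
    · exact Or.inr (hfrL ⟨subset_closure hz, h⟩)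
  obtain ⟨M₂, hM₂c, hCM₂, hM₂O⟩ := exists_compact_between hC hOopen hCO
  obtain ⟨g, hg1, hg0, hgcs, hg01⟩ :=
    exists_continuous_one_zero_of_isCompact hC isOpen_interior.isClosed_compl
      (disjoint_compl_right_iff_subset.mpr hCM₂)
  have hgsupp : Function.support (g : ℂ → ℝ) ⊆ interior M₂ := by
    intro z hz
    by_contra h
    exact hz (hg0 h)
  have hgsuppO : Function.support (g : ℂ → ℝ) ⊆ O :=
    hgsupp.trans (interior_subset.trans hM₂O)
  have hgtsupp : tsupport (g : ℂ → ℝ) ⊆ M₂ := by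
    have : closure (Function.support (g : ℂ → ℝ)) ⊆ closure (interior M₂) :=
      closure_mono hgsupp
    exact this.trans ((closure_mono interior_subset).trans hM₂c.isClosed.closure_subset)
  have hOU : O ⊆ U := by
    apply union_subset (interior_subset.trans hCU)
    exact interior_subset.trans (hLW.trans inter_subset_left)
  have hgtU : tsupport (g : ℂ → ℝ) ⊆ U := hgtsupp.trans (hM₂O.trans hOU)
  have hgconv := hconv g g.continuous hgcs hgtU
  -- interior L avoids supp ξ
  have hintLξ : ∀ z ∈ interior L, ξ z = 0 := fun z hz =>
    hWZ z (hLW (interior_subset hz))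
  -- rewrite the ξ-sum for g
  have hsumξ : (∑ᶠ z, (ξ z : ℝ) * g z) = ((∑ᶠ z ∈ C, ξ z : ℤ) : ℝ) := by
    have hfin : (Function.support (Set.indicator C ξ)).Finite := by
      apply Set.Finite.subset (aux_fin_inter_compact hdivξ hC hCU)
      intro y hy
      rw [Function.mem_support] at hy
      by_cases h : y ∈ C
      · rw [Set.indicator_of_mem h] at hy
        exact ⟨hy, h⟩
      · rw [Set.indicator_of_notMem h] at hy
        exact absurd rfl hy
    have hcast := AddMonoidHom.map_finsum (Int.castAddHom ℝ) hfin
    simp only [Int.coe_castAddHom] at hcast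
    rw [finsum_mem_def, hcast]
    apply finsum_congr
    intro z
    by_cases hzC : z ∈ C
    · simp [Set.indicator_of_mem hzC, hg1 hzC]
    · rw [Set.indicator_of_notMem hzC]
      by_cases hgz : g z = 0
      · simp [hgz]
      · rcases hgsuppO hgz with h | h
        · exact absurd (interior_subset h) hzC
        · simp [hintLξ z h]
  -- for each k with vanishing, rewrite the ξs k-sum for g
  have hsumξs : ∀ k, (∀ z ∈ interior L, ξs k z = 0) →
      (∑ᶠ z, (ξs k z : ℝ) * g z) = ((∑ᶠ z ∈ C, ξs k z : ℤ) : ℝ) := by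
    intro k hk
    have hfin : (Function.support (Set.indicator C (ξs k))).Finite := by
      apply Set.Finite.subset (aux_fin_inter_compact (hdiv k) hC hCU)
      intro y hy
      rw [Function.mem_support] at hy
      by_cases h : y ∈ C
      · rw [Set.indicator_of_mem h] at hy
        exact ⟨hy, h⟩
      · rw [Set.indicator_of_notMem h] at hy
        exact absurd rfl hy
    have hcast := AddMonoidHom.map_finsum (Int.castAddHom ℝ) hfin
    simp only [Int.coe_castAddHom] at hcast
    rw [finsum_mem_def, hcast]
    apply finsum_congr
    intro z
    by_cases hzC : z ∈ C
    · simp [Set.indicator_of_mem hzC, hg1 hzC]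
    · rw [Set.indicator_of_notMem hzC]
      by_cases hgz : g z = 0
      · simp [hgz]
      · rcases hgsuppO hgz with h | h
        · exact absurd (interior_subset h) hzC
        · simp [hk z h]
  -- conclude
  have E2 : ∀ᶠ k in atTop,
      dist (∑ᶠ z, (ξs k z : ℝ) * g z) (∑ᶠ z, (ξ z : ℝ) * g z) < 1 :=
    hgconv.eventually (Metric.tendsto_nhds.mp tendsto_id 1 one_pos) |>.mono (fun k hk => by
      simpa using hk)
  filter_upwards [hvanish, E2] with k hk hk2
  rw [hsumξs k hk, hsumξ, Real.dist_eq] at hk2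
  have hint : |(∑ᶠ z ∈ C, ξs k z) - (∑ᶠ z ∈ C, ξ z)| < 1 := by
    have : ((|(∑ᶠ z ∈ C, ξs k z) - (∑ᶠ z ∈ C, ξ z)| : ℤ) : ℝ) < 1 := by
      push_cast
      exact hk2
    exact_mod_cast this
  have := Int.abs_lt_one_iff.mp hint
  linarith
end
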